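/- arXiv:1908.06598 — 3 statements merged into one kernel-verified Lean document; each statement's English description precedes it below -/
import Mathlib

section
/- Let (L, ω, ρ) be a ρ-restricted labeled linear order on [n], with L given by π(1) ⋖ π(2) ⋖ ⋯ ⋖ π(n) for a permutation π. Define the tightened restriction ρ̄ recursively by ρ̄(π(n)) = ρ(π(n)); ρ̄(π(i)) = min(ρ̄(π(i+1)), ρ(π(i))) if ω(π(i)) < ω(π(i+1)); and ρ̄(π(i)) = min(ρ̄(π(i+1)) − 1, ρ(π(i))) if ω(π(i)) > ω(π(i+1)). Then the set of ρ-restricted (L,ω)-partitions equals the set of ρ̄-restricted (L,ω)-partitions: A(L,ω,ρ) = A(L,ω,ρ̄). -/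
open Finset MvPolynomial
open scoped Classical

noncomputable def rhoBarAux (ρπ : ℕ → ℤ) (asc : ℕ → Prop) (n : ℕ) : ℕ → ℤ
  | 0 => ρπ n
  | j + 1 =>
    if asc (n - (j + 1)) then min (rhoBarAux ρπ asc n j) (ρπ (n - (j + 1)))
    else min (rhoBarAux ρπ asc n j - 1) (ρπ (n - (j + 1)))

/-- The tightened restriction `ρ̄` in chain coordinates: `rhoBar ρπ asc n i = ρ̄(π(i))`,
where `ρπ i = ρ(π(i))` and `asc i` is the ascent condition at chain position `i`.
It satisfies `ρ̄(π(n)) = ρ(π(n))`, `ρ̄(π(i)) = min (ρ̄(π(i+1))) (ρ(π(i)))` at ascents and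
`ρ̄(π(i)) = min (ρ̄(π(i+1)) - 1) (ρ(π(i)))` at descents. -/
noncomputable def rhoBar (ρπ : ℕ → ℤ) (asc : ℕ → Prop) (n i : ℕ) : ℤ :=
  rhoBarAux ρπ asc n (n - i)

/-- The last chain position of the maximal ascending run starting at position `s`. -/
noncomputable def runEnd (asc : ℕ → Prop) (n s : ℕ) : ℕ :=
  Nat.find (p := fun e => s ≤ e ∧ (n ≤ e ∨ ¬ asc e))
    ⟨max s n, le_max_left _ _, Or.inl (le_max_right _ _)⟩

/-- The reduced weak descent composition: for each run start `s` (i.e. `s = 1` or a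
descent at `s - 1`), place the length of the run starting at `s` in position `ρ̄(π(s))`. -/
noncomputable def rdes (ρπ : ℕ → ℤ) (asc : ℕ → Prop) (n : ℕ) : ℤ →₀ ℕ :=
  ∑ s ∈ (Finset.Icc 1 n).filter (fun s => s = 1 ∨ ¬ asc (s - 1)),
    Finsupp.single (rhoBar ρπ asc n s) (runEnd asc n s - s + 1)

/-- `f` is an `(L,ω)`-partition for the linear order `L : π(1) ⋖ ⋯ ⋖ π(n)` on `[n]` with
labeling `ω`: colors are positive, weakly increasing along covers labeled by ascents of `ω`
and strictly increasing along covers labeled by descents of `ω`. -/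
def IsPPartition (n : ℕ) (π ω : ℕ → ℕ) (f : ℕ → ℤ) : Prop :=
  (∀ i ∈ Set.Icc 1 n, 1 ≤ f i) ∧
  ∀ i : ℕ, 1 ≤ i → i < n →
    (ω (π i) < ω (π (i + 1)) → f (π i) ≤ f (π (i + 1))) ∧
    (ω (π (i + 1)) < ω (π i) → f (π i) < f (π (i + 1)))

/-!
Since `ρ̄ ≤ ρ` pointwise, every `ρ̄`-restricted partition is `ρ`-restricted. Conversely, if
`f ≤ ρ` then `f ≤ ρ̄` by downward induction along the chain: `f(π(n)) ≤ ρ(π(n)) = ρ̄(π(n))`, and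
an ascent (descent) at `π(i) ⋖ π(i+1)` gives `f(π(i)) ≤ f(π(i+1))` (`f(π(i)) ≤ f(π(i+1)) - 1`),
which together with `f(π(i)) ≤ ρ(π(i))` is exactly the bound defining `ρ̄(π(i))`.
-/

section RhoBar

variable (ρπ : ℕ → ℤ) (asc : ℕ → Prop)

lemma rhoBar_self (n : ℕ) : rhoBar ρπ asc n n = ρπ n := by
  simp [rhoBar, rhoBarAux]

lemma rhoBar_of_lt {n i : ℕ} (hi : i < n) :
    rhoBar ρπ asc n i =
      if asc i then min (rhoBar ρπ asc n (i + 1)) (ρπ i)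
      else min (rhoBar ρπ asc n (i + 1) - 1) (ρπ i) := by
  have hsucc : n - i = n - (i + 1) + 1 := by omega
  have hpos : n - (n - (i + 1) + 1) = i := by omega
  rw [rhoBar, hsucc, rhoBarAux, hpos, rhoBar]

lemma rhoBar_le {n i : ℕ} (hi : i ≤ n) : rhoBar ρπ asc n i ≤ ρπ i := by
  rcases hi.eq_or_lt with rfl | hlt
  · exact (rhoBar_self ρπ asc i).le
  · rw [rhoBar_of_lt ρπ asc hlt]
    split_ifs <;> exact min_le_right _ _

variable {ρπ asc}

lemma le_rhoBar {g : ℕ → ℤ} {n i : ℕ}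
    (hasc : ∀ k, i ≤ k → k < n → asc k → g k ≤ g (k + 1))
    (hdesc : ∀ k, i ≤ k → k < n → ¬ asc k → g k < g (k + 1))
    (hρ : ∀ k, i ≤ k → k ≤ n → g k ≤ ρπ k) (hi : i ≤ n) :
    g i ≤ rhoBar ρπ asc n i := by
  induction hi using Nat.decreasingInduction with
  | self => exact (rhoBar_self ρπ asc n).symm ▸ hρ n le_rfl le_rfl
  | of_succ k hk ih =>
    have hnext := ih (fun j hj => hasc j (by omega)) (fun j hj => hdesc j (by omega))
      (fun j hj => hρ j (by omega))
    rw [rhoBar_of_lt ρπ asc hk]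
    split_ifs with hk_asc
    · exact le_min ((hasc k le_rfl hk hk_asc).trans hnext) (hρ k le_rfl hk.le)
    · have hstep := hdesc k le_rfl hk hk_asc
      exact le_min (by omega) (hρ k le_rfl hk.le)

end RhoBar

lemma IsPPartition.lt_succ_of_not_ascent {n : ℕ} {π ω : ℕ → ℕ} {f : ℕ → ℤ} (hf : IsPPartition n π ω f)
    (hinj : Set.InjOn (ω ∘ π) (Set.Icc 1 n)) {k : ℕ} (hk : 1 ≤ k) (hkn : k < n)
    (hk_asc : ¬ ω (π k) < ω (π (k + 1))) : f (π k) < f (π (k + 1)) := by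
  have hne : ω (π k) ≠ ω (π (k + 1)) := fun h =>
    k.succ_ne_self (hinj ⟨hk, hkn.le⟩ ⟨by omega, hkn⟩ h).symm
  exact (hf.2 k hk hkn).2 (lt_of_le_of_ne (not_lt.1 hk_asc) hne.symm)

/-- For a `ρ`-restricted labeled linear order `(L,ω,ρ)` with
`L : π(1) ⋖ ⋯ ⋖ π(n)`, the set of `ρ`-restricted `(L,ω)`-partitions equals the set of
`ρ̄`-restricted `(L,ω)`-partitions, where `ρ̄` is the tightened restriction. -/
theorem restricted_partitions_eq_tightened (n : ℕ) (π ω : ℕ → ℕ) (ρ : ℕ → ℤ)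
    (hπ : Set.BijOn π (Set.Icc 1 n) (Set.Icc 1 n))
    (hω : Set.BijOn ω (Set.Icc 1 n) (Set.Icc 1 n)) :
    {f : ℕ → ℤ | IsPPartition n π ω f ∧ ∀ i ∈ Set.Icc 1 n, f i ≤ ρ i} =
      {f : ℕ → ℤ | IsPPartition n π ω f ∧ ∀ i ∈ Set.Icc 1 n,
        f (π i) ≤ rhoBar (fun k => ρ (π k)) (fun k => ω (π k) < ω (π (k + 1))) n i} := by
  have hinj : Set.InjOn (ω ∘ π) (Set.Icc 1 n) := hω.injOn.comp hπ.injOn hπ.mapsTo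
  ext f
  refine and_congr_right fun hf => ⟨fun hρ i hi => ?_, fun hρbar j hj => ?_⟩
  · exact le_rhoBar (fun k hik hkn => (hf.2 k (hi.1.trans hik) hkn).1)
      (fun k hik hkn => hf.lt_succ_of_not_ascent hinj (hi.1.trans hik) hkn)
      (fun k hik hkn => hρ _ (hπ.mapsTo ⟨hi.1.trans hik, hkn⟩)) hi.2
  · obtain ⟨i, hi, rfl⟩ := hπ.surjOn hj
    exact (hρbar i hi).trans (rhoBar_le _ _ hi.2)
end

section
/- Let G be a finite simple graph on [n] with a restriction map ρ: [n] → Z. Then the set of ρ-restricted proper colorings of G decomposes as the disjoint union, over acyclic orientations o of G, of the ρ-restricted colorings compatible with o; moreover every coloring compatible with o has exactly |{i → j in o : i < j}| descents. Consequently X_{G,ρ}(x;t) = Σ_{o ∈ AO(G)} t^{|{i→j in o : i<j}|} Σ_{f compatible with o, f ≤ ρ} x_{f(1)} ⋯ x_{f(n)}. -/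
/-!
A proper coloring `f` orients every edge from its larger to its smaller color. This is the
only orientation compatible with `f`, and it is acyclic because colors strictly decrease
along directed paths. Grouping the proper colorings by their induced orientation, the class
of `o` consists exactly of the colorings compatible with `o`, and for each of them the
descents are the edges of `o` that point from a smaller to a larger vertex.
-/

open Finset MvPolynomial
open scoped Classical

/-- `o` is an orientation of `G`: it directs exactly the edges of `G`, one way each. -/
def IsOrientation {n : ℕ} (G : SimpleGraph (Fin n)) (o : Fin n → Fin n → Bool) : Prop :=
  (∀ i j, o i j = true → G.Adj i j) ∧ ∀ i j, G.Adj i j → (o i j = true ↔ ¬ o j i = true)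

/-- `o` is acyclic: no directed cycles. -/
def IsAcyclicOrient {n : ℕ} (o : Fin n → Fin n → Bool) : Prop :=
  ∀ v, ¬ Relation.TransGen (fun i j => o i j = true) v v

/-- `f` is compatible with `o`: every directed edge `i → j` satisfies `f i > f j`. -/
def Compatible {n : ℕ} (f : Fin n → ℤ) (o : Fin n → Fin n → Bool) : Prop :=
  ∀ i j, o i j = true → f j < f i

/-- The `ρ`-restricted colorings: `f : [n] → ℤ` with `1 ≤ f i ≤ ρ i` for all `i`. -/
noncomputable def colorings (n : ℕ) (ρ : Fin n → ℤ) : Finset (Fin n → ℤ) :=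
  Fintype.piFinset fun i => Finset.Icc 1 (ρ i)

def IsProper {n : ℕ} (G : SimpleGraph (Fin n)) (f : Fin n → ℤ) : Prop :=
  ∀ i j, G.Adj i j → f i ≠ f j

/-- The number of descents of `f`: edges `{i,j}` with `i < j` and `f i > f j`. -/
noncomputable def desG {n : ℕ} (G : SimpleGraph (Fin n)) (f : Fin n → ℤ) : ℕ :=
  ((Finset.univ : Finset (Fin n × Fin n)).filter fun p =>
    p.1 < p.2 ∧ G.Adj p.1 p.2 ∧ f p.2 < f p.1).card

/-- The number of directed edges `i → j` of `o` with `i < j`. -/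
noncomputable def ascEdges {n : ℕ} (o : Fin n → Fin n → Bool) : ℕ :=
  ((Finset.univ : Finset (Fin n × Fin n)).filter fun p =>
    p.1 < p.2 ∧ o p.1 p.2 = true).card

/-- `X_{G,ρ}(x;t) = Σ_f t^{des_G(f)} x_{f(1)} ⋯ x_{f(n)}` over `ρ`-restricted proper
colorings `f` (`Polynomial.X` is `t`). -/
noncomputable def Xchrom {n : ℕ} (G : SimpleGraph (Fin n)) (ρ : Fin n → ℤ) :
    Polynomial (MvPolynomial ℤ ℤ) :=
  ∑ f ∈ (colorings n ρ).filter (fun f => IsProper G f),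
    Polynomial.C (∏ i : Fin n, MvPolynomial.X (f i)) * Polynomial.X ^ desG G f

section InducedOrientation

variable {n : ℕ}

noncomputable def inducedOrientation (G : SimpleGraph (Fin n)) (f : Fin n → ℤ) :
    Fin n → Fin n → Bool :=
  fun i j => decide (G.Adj i j ∧ f j < f i)

@[simp]
lemma inducedOrientation_eq_true {G : SimpleGraph (Fin n)} {f : Fin n → ℤ} {i j : Fin n} :
    inducedOrientation G f i j = true ↔ G.Adj i j ∧ f j < f i := by
  simp [inducedOrientation]

lemma Compatible.lt_of_transGen {o : Fin n → Fin n → Bool} {f : Fin n → ℤ}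
    (hc : Compatible f o) {a b : Fin n}
    (h : Relation.TransGen (fun i j => o i j = true) a b) : f b < f a := by
  induction h with
  | single h => exact hc _ _ h
  | tail _ h ih => exact (hc _ _ h).trans ih

lemma Compatible.isAcyclicOrient {o : Fin n → Fin n → Bool} {f : Fin n → ℤ}
    (hc : Compatible f o) : IsAcyclicOrient o :=
  fun _ h => (hc.lt_of_transGen h).false

lemma compatible_inducedOrientation (G : SimpleGraph (Fin n)) (f : Fin n → ℤ) :
    Compatible f (inducedOrientation G f) :=
  fun _ _ h => (inducedOrientation_eq_true.1 h).2

lemma IsProper.isOrientation_inducedOrientation {G : SimpleGraph (Fin n)} {f : Fin n → ℤ}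
    (hf : IsProper G f) : IsOrientation G (inducedOrientation G f) := by
  refine ⟨fun i j h => (inducedOrientation_eq_true.1 h).1, fun i j hadj => ?_⟩
  simp only [inducedOrientation_eq_true, hadj, hadj.symm, true_and, not_lt]
  exact ⟨le_of_lt, fun h => h.lt_of_ne (hf i j hadj).symm⟩

lemma IsOrientation.reverse_eq_true {G : SimpleGraph (Fin n)} {o : Fin n → Fin n → Bool}
    (ho : IsOrientation G o) {i j : Fin n} (hadj : G.Adj i j) (h : o i j ≠ true) :
    o j i = true := by
  by_contra h'
  exact h ((ho.2 i j hadj).2 h')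

lemma IsOrientation.isProper_of_compatible {G : SimpleGraph (Fin n)}
    {o : Fin n → Fin n → Bool} {f : Fin n → ℤ} (ho : IsOrientation G o)
    (hc : Compatible f o) : IsProper G f := by
  intro i j hadj
  by_cases h : o i j = true
  · exact (hc i j h).ne'
  · exact (hc j i (ho.reverse_eq_true hadj h)).ne

lemma IsOrientation.eq_inducedOrientation {G : SimpleGraph (Fin n)}
    {o : Fin n → Fin n → Bool} {f : Fin n → ℤ} (ho : IsOrientation G o)
    (hc : Compatible f o) : o = inducedOrientation G f := by
  funext i j
  rw [Bool.eq_iff_iff, inducedOrientation_eq_true]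
  refine ⟨fun h => ⟨ho.1 i j h, hc i j h⟩, fun ⟨hadj, hlt⟩ => ?_⟩
  by_contra h
  exact (hlt.trans (hc j i (ho.reverse_eq_true hadj h))).false

lemma IsOrientation.desG_eq_ascEdges {G : SimpleGraph (Fin n)} {o : Fin n → Fin n → Bool}
    {f : Fin n → ℤ} (ho : IsOrientation G o) (hc : Compatible f o) :
    desG G f = ascEdges o := by
  rw [desG, ascEdges, ho.eq_inducedOrientation hc]
  simp only [inducedOrientation_eq_true]

lemma IsOrientation.filter_inducedOrientation_eq {G : SimpleGraph (Fin n)}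
    {o : Fin n → Fin n → Bool} (ho : IsOrientation G o) (s : Finset (Fin n → ℤ)) :
    (s.filter (IsProper G)).filter (fun f => inducedOrientation G f = o) =
      s.filter (fun f => Compatible f o) := by
  ext f
  simp only [mem_filter, and_assoc]
  refine ⟨fun ⟨hs, _, hfo⟩ => ⟨hs, hfo ▸ compatible_inducedOrientation G f⟩,
    fun ⟨hs, hc⟩ => ⟨hs, ho.isProper_of_compatible hc, (ho.eq_inducedOrientation hc).symm⟩⟩

end InducedOrientation

/-- The `ρ`-restricted proper colorings decompose over acyclic
orientations: every such coloring is compatible with a unique acyclic orientation, every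
coloring compatible with an acyclic orientation `o` has exactly `#{i → j in o : i < j}`
descents, and consequently
`X_{G,ρ}(x;t) = Σ_{o ∈ AO(G)} t^{#{i→j in o : i<j}} Σ_{f compatible with o, f ≤ ρ} x^f`. -/
theorem chromatic_orientation_decomposition {n : ℕ} (G : SimpleGraph (Fin n))
    (ρ : Fin n → ℤ) :
    (∀ f ∈ colorings n ρ, IsProper G f →
      ∃! o : Fin n → Fin n → Bool,
        (IsOrientation G o ∧ IsAcyclicOrient o) ∧ Compatible f o) ∧
    (∀ o : Fin n → Fin n → Bool, IsOrientation G o → IsAcyclicOrient o →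
      ∀ f ∈ colorings n ρ, Compatible f o → desG G f = ascEdges o) ∧
    Xchrom G ρ =
      ∑ o ∈ (Finset.univ : Finset (Fin n → Fin n → Bool)).filter
          (fun o => IsOrientation G o ∧ IsAcyclicOrient o),
        Polynomial.X ^ ascEdges o *
          ∑ f ∈ (colorings n ρ).filter (fun f => Compatible f o),
            Polynomial.C (∏ i : Fin n, MvPolynomial.X (f i)) := by
  refine ⟨fun f _ hf => ⟨inducedOrientation G f,
      ⟨⟨hf.isOrientation_inducedOrientation,
        (compatible_inducedOrientation G f).isAcyclicOrient⟩,
        compatible_inducedOrientation G f⟩,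
      fun o ⟨⟨ho, _⟩, hc⟩ => ho.eq_inducedOrientation hc⟩,
    fun o ho _ f _ hc => ho.desG_eq_ascEdges hc, ?_⟩
  have hmaps : ∀ f ∈ (colorings n ρ).filter (IsProper G),
      inducedOrientation G f ∈ (univ : Finset (Fin n → Fin n → Bool)).filter
        (fun o => IsOrientation G o ∧ IsAcyclicOrient o) := fun f hf =>
    mem_filter.2 ⟨mem_univ _, (mem_filter.1 hf).2.isOrientation_inducedOrientation,
      (compatible_inducedOrientation G f).isAcyclicOrient⟩
  rw [Xchrom, ← sum_fiberwise_of_maps_to hmaps]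
  refine sum_congr rfl fun o ho => ?_
  have ho : IsOrientation G o := (mem_filter.1 ho).2.1
  rw [ho.filter_inducedOrientation_eq, mul_sum]
  refine sum_congr rfl fun f hf => ?_
  rw [ho.desG_eq_ascEdges (mem_filter.1 hf).2, mul_comm]
end

section
/- Let a be a tail-strong weak composition indexed by Z. Then applying the substitution η_0 (setting x_i = 0 for all i > 0) to the backstable slide series ←F_a(x) yields the fundamental quasisymmetric function: η_0(←F_a(x)) = F_{flat(a)}(x_−). -/
/-!
Let `b` be supported in the nonpositive positions with `flat b` refining `flat a`; it remains to
see that `b` is below `a` in reverse lexicographic order. Otherwise `a i < b i` at the largest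
position `i` where they differ. The suffix sums of `flat c` are exactly the tail sums
`∑_{j ≥ t} c j`, and a refinement only adds suffix sums, so `a i + S`, with `S` the common tail sum
above `i`, is a tail sum of `b`. The tail sums of `b` jump from `S` straight to `b i + S > a i + S`,
hence `a i = 0`. But then the weight `b i` is balanced by weight of `a` strictly below `i`, and
tail-strongness forces `a i > 0`.
-/

open Finset MvPolynomial
open scoped Classical

/-- The strong composition underlying a weak composition (entries listed in increasing
order of position, zeros omitted). -/
noncomputable def wcFlat (a : ℤ →₀ ℕ) : List ℕ :=
  (a.support.sort (· ≤ ·)).map fun i => a i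

/-- `β` refines `α` iff adjacent parts of `β` can be iteratively combined to give `α`. -/
def wcRefines (β α : List ℕ) : Prop :=
  ∃ L : List (List ℕ), (∀ l ∈ L, l ≠ []) ∧ L.flatten = β ∧ L.map List.sum = α

/-- `b ≤_c a`: `flat b` refines `flat a` and `b` is weakly smaller than `a` in reverse
lexicographic order (at the largest position where they differ, `b` is smaller). -/
def wcLeC (b a : ℤ →₀ ℕ) : Prop :=
  wcRefines (wcFlat b) (wcFlat a) ∧
    (b = a ∨ ∃ i : ℤ, b i < a i ∧ ∀ j : ℤ, i < j → b j = a j)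

/-- Encode `v : Fin r → ℕ` as a weak composition supported in `{1,…,r}` (variable `i`
corresponds to position `i+1`). -/
noncomputable def toWeakComp (r : ℕ) (v : Fin r → ℕ) : ℤ →₀ ℕ :=
  Finsupp.embDomain
    ⟨fun i : Fin r => ((i : ℕ) : ℤ) + 1, fun i j h => by
      apply Fin.ext
      simp only at h
      omega⟩
    ((Finsupp.equivFunOnFinite.symm v : Fin r →₀ ℕ))

noncomputable def wcWeight (a : ℤ →₀ ℕ) : ℕ := a.sum fun _ m => m

/-- The fundamental slide polynomial `F_a(x_1,…,x_r) = Σ_{b ∈ C_{≤a}^{(r)}} x^b`, the sum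
over weak compositions `b ≤_c a` with support contained in `{1,…,r}` (variable `i : Fin r`
represents `x_{i+1}`). -/
noncomputable def slide (r : ℕ) (a : ℤ →₀ ℕ) : MvPolynomial (Fin r) ℤ :=
  ∑ v ∈ (Finset.Nat.antidiagonalTuple r (wcWeight a)).filter
      fun v => wcLeC (toWeakComp r v) a,
    MvPolynomial.monomial (Finsupp.equivFunOnFinite.symm v : Fin r →₀ ℕ) (1 : ℤ)

/-- The backstable fundamental slide series `←F_a(x) = Σ_{b ≤_c a} x^b`, as a formal power
series in the doubly infinite alphabet `{x_i : i ∈ ℤ}` (its coefficient at the monomial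
`x^b` is `1` iff `b ≤_c a`). -/
noncomputable def backSlide (a : ℤ →₀ ℕ) : MvPowerSeries ℤ ℤ :=
  fun b => if wcLeC b a then 1 else 0

/-- Gessel's fundamental quasisymmetric function `F_β(x_-)` in the variables `{x_i : i ≤ 0}`:
the sum of all monomials `x^b` with `b` supported in nonpositive positions and `flat b`
refining `β`. -/
noncomputable def fundQ (β : List ℕ) : MvPowerSeries ℤ ℤ :=
  fun b => if (∀ i ∈ b.support, i ≤ 0) ∧ wcRefines (wcFlat b) β then 1 else 0

/-- The fundamental slide polynomial `F_a(x_1,…,x_r)` viewed inside the big power series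
ring: the sum of monomials `x^b` over `b ∈ C_{≤a}^{(r)}`. -/
noncomputable def posSlide (r : ℕ) (a : ℤ →₀ ℕ) : MvPowerSeries ℤ ℤ :=
  fun b => if (∀ i ∈ b.support, 1 ≤ i ∧ i ≤ (r : ℤ)) ∧ wcLeC b a then 1 else 0

/-- The substitution `η₀` setting `x_i = 0` for all `i > 0`. -/
noncomputable def eta0 (f : MvPowerSeries ℤ ℤ) : MvPowerSeries ℤ ℤ :=
  fun b => if ∀ i ∈ b.support, i ≤ 0 then f b else 0

/-- A weak composition is tail-strong if a positive entry at a nonpositive position forces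
all entries between it and position `0` to be positive. -/
def TailStrong (a : ℤ →₀ ℕ) : Prop :=
  ∀ i : ℤ, i ≤ 0 → 0 < a i → ∀ j : ℤ, i ≤ j → j ≤ 0 → 0 < a j

namespace List

variable {α : Type*} [LinearOrder α]

theorem Pairwise.exists_filter_le_eq_drop {l : List α} (hl : l.Pairwise (· ≤ ·)) (t : α) :
    ∃ k, l.filter (fun j => t ≤ j) = l.drop k := by
  induction l with
  | nil => exact ⟨0, rfl⟩
  | cons x l ih =>
    rw [pairwise_cons] at hl
    by_cases hx : t ≤ x
    · refine ⟨0, filter_eq_self.2 fun j hj => ?_⟩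
      rcases mem_cons.1 hj with rfl | hj
      · simpa using hx
      · simpa using hx.trans (hl.1 j hj)
    · obtain ⟨k, hk⟩ := ih hl.2
      exact ⟨k + 1, by rw [filter_cons_of_neg (by simpa using hx), hk, drop_succ_cons]⟩

theorem Pairwise.filter_getElem_le_eq_drop {l : List α} (hl : l.Pairwise (· < ·)) {k : ℕ}
    (hk : k < l.length) : l.filter (fun j => l[k] ≤ j) = l.drop k := by
  induction l generalizing k with
  | nil => simp at hk
  | cons x l ih =>
    rw [pairwise_cons] at hl
    cases k with
    | zero =>
      refine filter_eq_self.2 fun j hj => ?_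
      rcases mem_cons.1 hj with rfl | hj
      · simp
      · simpa using (hl.1 j hj).le
    | succ k =>
      have hk' : k < l.length := by simpa using hk
      have hx : ¬ l[k] ≤ x := not_le.2 (hl.1 _ (getElem_mem hk'))
      rw [getElem_cons_succ, filter_cons_of_neg (by simpa using hx), drop_succ_cons, ih hl.2]

end List

theorem Finset.sum_map_filter_sort {α M : Type*} [LinearOrder α] [AddCommMonoid M]
    (s : Finset α) (p : α → Prop) [DecidablePred p] (f : α → M) :
    (((s.sort (· ≤ ·)).filter p).map f).sum = ∑ j ∈ s with p j, f j := by
  rw [Finset.sum_eq_multiset_sum, Finset.filter_val, ← Finset.sort_eq s (· ≤ ·),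
    Multiset.filter_coe, Multiset.map_coe, Multiset.sum_coe]

namespace wcRefines

variable {β α : List ℕ}

theorem sum_eq (h : wcRefines β α) : β.sum = α.sum := by
  obtain ⟨L, -, rfl, rfl⟩ := h
  exact List.sum_flatten

theorem exists_sum_drop_eq (h : wcRefines β α) (k : ℕ) :
    ∃ m, (β.drop m).sum = (α.drop k).sum := by
  obtain ⟨L, -, rfl, rfl⟩ := h
  refine ⟨(L.take k).flatten.length, ?_⟩
  have hsplit : L.flatten = (L.take k).flatten ++ (L.drop k).flatten := by
    rw [← List.flatten_append, List.take_append_drop]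
  rw [hsplit, List.drop_left, List.sum_flatten, List.map_drop]

end wcRefines

theorem sum_wcFlat (c : ℤ →₀ ℕ) : (wcFlat c).sum = c.degree := by
  simpa [wcFlat, Finsupp.degree_apply] using
    Finset.sum_map_filter_sort c.support (fun _ => True) c

noncomputable def tailDegree (c : ℤ →₀ ℕ) (t : ℤ) : ℕ :=
  (c.filter (t ≤ ·)).degree

namespace tailDegree

variable (c : ℤ →₀ ℕ)

theorem eq_sum_map_filter_sort (t : ℤ) :
    tailDegree c t = (((c.support.sort (· ≤ ·)).filter (fun j => t ≤ j)).map c).sum := by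
  rw [Finset.sum_map_filter_sort, tailDegree, Finsupp.degree_apply, Finsupp.support_filter]
  exact Finset.sum_congr rfl fun j hj => Finsupp.filter_apply_pos _ _ (Finset.mem_filter.1 hj).2

theorem antitone : Antitone (tailDegree c) := fun t u htu =>
  Finsupp.degree_mono fun j => by
    simp only [Finsupp.filter_apply]
    split_ifs <;> omega

theorem eq_add_succ (i : ℤ) : tailDegree c i = c i + tailDegree c (i + 1) := by
  have hsplit : c.filter (i ≤ ·) = Finsupp.single i (c i) + c.filter (i + 1 ≤ ·) := by
    ext j
    simp only [Finsupp.filter_apply, Finsupp.add_apply, Finsupp.single_apply]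
    split_ifs <;> first | omega | simp_all
  rw [tailDegree, hsplit, map_add, Finsupp.degree_single, tailDegree]

theorem add_degree_filter_lt (t : ℤ) :
    tailDegree c t + (c.filter (fun j => ¬ t ≤ j)).degree = c.degree := by
  rw [tailDegree, ← map_add, Finsupp.filter_add_filter_not]

theorem congr {a b : ℤ →₀ ℕ} {t : ℤ} (h : ∀ j, t ≤ j → b j = a j) :
    tailDegree b t = tailDegree a t := by
  rw [tailDegree, tailDegree]
  congr 1
  ext j
  simp only [Finsupp.filter_apply]
  split_ifs with hj
  exacts [h j hj, rfl]

theorem not_mem_Ioo (i t : ℤ) :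
    tailDegree c t ∉ Set.Ioo (tailDegree c (i + 1)) (tailDegree c i) := by
  rintro ⟨hlo, hhi⟩
  rcases le_or_gt t i with hti | hti
  · exact (antitone c hti).not_gt hhi
  · exact (antitone c (show i + 1 ≤ t by omega)).not_gt hlo

theorem exists_eq_sum_drop (t : ℤ) : ∃ k, tailDegree c t = ((wcFlat c).drop k).sum := by
  obtain ⟨k, hk⟩ := (Finset.pairwise_sort c.support (· ≤ ·)).exists_filter_le_eq_drop t
  exact ⟨k, by rw [eq_sum_map_filter_sort, hk, wcFlat, List.map_drop]⟩

theorem exists_sum_drop_eq (k : ℕ) : ∃ t, ((wcFlat c).drop k).sum = tailDegree c t := by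
  set l := c.support.sort (· ≤ ·)
  by_cases hk : k < l.length
  · refine ⟨l[k], ?_⟩
    rw [eq_sum_map_filter_sort,
      (Finset.sortedLT_sort c.support).pairwise.filter_getElem_le_eq_drop hk, wcFlat, List.map_drop]
  · obtain ⟨M, hM⟩ := c.support.exists_le
    refine ⟨M + 1, ?_⟩
    rw [List.drop_eq_nil_of_le (by simpa [wcFlat, l] using hk), eq_sum_map_filter_sort,
      List.filter_eq_nil_iff.2 fun j hj => by simpa using hM j (Finset.mem_sort _ |>.1 hj)]
    rfl

end tailDegree

theorem exists_tailDegree_eq_of_wcRefines {a b : ℤ →₀ ℕ} (h : wcRefines (wcFlat b) (wcFlat a))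
    (s : ℤ) : ∃ t, tailDegree b t = tailDegree a s := by
  obtain ⟨k, hk⟩ := tailDegree.exists_eq_sum_drop a s
  obtain ⟨m, hm⟩ := h.exists_sum_drop_eq k
  obtain ⟨t, ht⟩ := tailDegree.exists_sum_drop_eq b m
  exact ⟨t, by rw [← ht, hm, hk]⟩

theorem Finsupp.toColex_le_toColex_iff {α N : Type*} [LinearOrder α] [Zero N] [PartialOrder N]
    {b a : α →₀ N} :
    toColex b ≤ toColex a ↔ b = a ∨ ∃ i, b i < a i ∧ ∀ j, i < j → b j = a j := by
  rw [le_iff_eq_or_lt, Finsupp.Colex.lt_iff, toColex_inj]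
  simp only [ofColex_toColex, and_comm]

/-- If `a i = 0`, the excess `b i` is balanced by weight of `a` strictly below `i`, and
tail-strongness then fills in position `i`. -/
theorem TailStrong.apply_pos_of_lt_of_agree_above {a b : ℤ →₀ ℕ} (hts : TailStrong a)
    (hb : ∀ i ∈ b.support, i ≤ 0) (hdeg : b.degree = a.degree) {i : ℤ}
    (habove : ∀ j, i < j → a j = b j) (hlt : a i < b i) : 0 < a i := by
  have hT := tailDegree.congr (t := i + 1) fun j hj => (habove j (by omega)).symm
  have hsplit_a := tailDegree.add_degree_filter_lt a i
  have hsplit_b := tailDegree.add_degree_filter_lt b i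
  rw [tailDegree.eq_add_succ] at hsplit_a hsplit_b
  have hlower : (a.filter (fun j => ¬ i ≤ j)).degree ≠ 0 := by omega
  obtain ⟨k, hk⟩ := Finsupp.ne_iff.1 (mt (Finsupp.degree_eq_zero_iff _).2 hlower)
  simp only [Finsupp.filter_apply, Finsupp.coe_zero, Pi.zero_apply, ne_eq, ite_eq_right_iff,
    not_forall] at hk
  obtain ⟨hki, hk⟩ := hk
  have hi : i ≤ 0 := hb i (Finsupp.mem_support_iff.2 (by omega))
  exact hts k (by omega) (Nat.pos_of_ne_zero hk) i (by omega) hi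

theorem toColex_le_of_wcRefines {a b : ℤ →₀ ℕ} (hts : TailStrong a)
    (hb : ∀ i ∈ b.support, i ≤ 0) (href : wcRefines (wcFlat b) (wcFlat a)) :
    toColex b ≤ toColex a := by
  rw [← not_lt, Finsupp.Colex.lt_iff]
  rintro ⟨i, habove, hlt⟩
  simp only [ofColex_toColex] at habove hlt
  have hdeg : b.degree = a.degree := by rw [← sum_wcFlat, ← sum_wcFlat, href.sum_eq]
  have hai := hts.apply_pos_of_lt_of_agree_above hb hdeg habove hlt
  have hT := tailDegree.congr (t := i + 1) fun j hj => (habove j (by omega)).symm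
  obtain ⟨t, ht⟩ := exists_tailDegree_eq_of_wcRefines href i
  refine tailDegree.not_mem_Ioo b i t ?_
  rw [ht, tailDegree.eq_add_succ a, tailDegree.eq_add_succ b i, hT]
  constructor <;> omega

theorem wcLeC_iff_wcRefines {a b : ℤ →₀ ℕ} (hts : TailStrong a) (hb : ∀ i ∈ b.support, i ≤ 0) :
    wcLeC b a ↔ wcRefines (wcFlat b) (wcFlat a) :=
  ⟨And.left, fun href =>
    ⟨href, Finsupp.toColex_le_toColex_iff.1 (toColex_le_of_wcRefines hts hb href)⟩⟩

/-- For a tail-strong weak composition `a`, setting `x_i = 0` for all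
`i > 0` in the backstable slide series yields the fundamental quasisymmetric function:
`η₀(←F_a(x)) = F_{flat(a)}(x_-)`. -/
theorem eta0_backSlide (a : ℤ →₀ ℕ) (hts : TailStrong a) :
    eta0 (backSlide a) = fundQ (wcFlat a) := by
  funext b
  by_cases hb : ∀ i ∈ b.support, i ≤ 0
  · simp only [eta0, backSlide, fundQ, wcLeC_iff_wcRefines hts hb]
    exact (if_pos hb).trans (if_congr (and_iff_right hb).symm rfl rfl)
  · simp only [eta0, fundQ, hb, false_and, if_false]
end
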